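/- arXiv:2105.01207 — 2 statements merged into one kernel-verified Lean document; each statement's English description precedes it below -/
import Mathlib

section
/- Let S_c = {c·w : w ∈ S} where S = {w ∈ ℂ : 0 < Im w < π} and c ≠ 0 with arg(c) = θ ∈ (-π/2, π/2). Then the exponential map is injective on S_c if and only if |c| ≤ 2 cos θ, equivalently |c - 1| ≤ 1. -/
open Real

/-!
`exp (c w₁) = exp (c w₂)` means `w₁ - w₂ ∈ ℤ · (2πi / c)`, so `exp` is injective on `c · S`
iff no nonzero integer multiple of `2πi / c` joins two points of the strip `S`, i.e. iff the
height `π` of `S` is at most `Im (2πi / c) = 2π Re c / |c|² = 2π cos θ / |c|`.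
-/

theorem le_abs_iff_forall_add_int_mul_mem_Ioo {a h : ℝ} :
    a ≤ |h| ↔ ∀ x ∈ Set.Ioo 0 a, ∀ n : ℤ, x + n * h ∈ Set.Ioo 0 a → n = 0 := by
  constructor
  · rintro hah x ⟨hx0, hxa⟩ n ⟨hy0, hya⟩
    have hnh : |(n : ℝ)| * |h| < 1 * |h| := by
      rw [← abs_mul, one_mul, abs_lt]; constructor <;> linarith
    have hn : |(n : ℝ)| < 1 := lt_of_mul_lt_mul_right hnh (abs_nonneg h)
    exact Int.abs_lt_one_iff.mp (by exact_mod_cast hn)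
  · intro H
    by_contra! hlt
    obtain ⟨hlo, hhi⟩ := abs_lt.mp hlt
    -- `(a - h) / 2` and `(a + h) / 2` both lie in `(0, a)` and differ by `h`.
    exact one_ne_zero <| H ((a - h) / 2) ⟨by linarith, by linarith⟩ 1
      ⟨by push_cast; linarith, by push_cast; linarith⟩

namespace Complex

theorem injOn_exp_iff {s : Set ℂ} :
    Set.InjOn exp s ↔ ∀ z ∈ s, ∀ n : ℤ, z + n * (2 * π * I) ∈ s → n = 0 := by
  constructor
  · intro hinj z hz n hzn
    have hperiod : z + n * (2 * π * I) = z :=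
      hinj hzn hz (exp_eq_exp_iff_exists_int.mpr ⟨n, rfl⟩)
    simpa [two_pi_I_ne_zero] using hperiod
  · intro H z₁ hz₁ z₂ hz₂ hexp
    obtain ⟨n, rfl⟩ := exp_eq_exp_iff_exists_int.mp hexp
    simp [H z₂ hz₂ n hz₁]

theorem injOn_exp_image_mul_iff {c : ℂ} (hc : c ≠ 0) {s : Set ℂ} :
    Set.InjOn exp ((c * ·) '' s) ↔
      ∀ w ∈ s, ∀ n : ℤ, w + n * (2 * π * I / c) ∈ s → n = 0 := by
  have hmul (w : ℂ) (n : ℤ) : c * w + n * (2 * π * I) = c * (w + n * (2 * π * I / c)) := by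
    field_simp
  simp only [injOn_exp_iff, Set.forall_mem_image, hmul,
    (mul_right_injective₀ hc).mem_set_image]

theorem le_abs_im_iff_forall_add_int_mul_mem_strip {a : ℝ} {v : ℂ} :
    a ≤ |v.im| ↔ ∀ w ∈ {w : ℂ | 0 < w.im ∧ w.im < a}, ∀ n : ℤ,
      w + n * v ∈ {w : ℂ | 0 < w.im ∧ w.im < a} → n = 0 := by
  have him (w : ℂ) (n : ℤ) : (w + n * v).im = w.im + n * v.im := by simp
  rw [le_abs_iff_forall_add_int_mul_mem_Ioo]
  simp only [Set.mem_ofPred_eq, him, Set.mem_Ioo]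
  constructor
  · intro H w hw n hn
    exact H w.im hw n hn
  · intro H x hx n hn
    simpa using H (x * I) (by simpa using hx) n (by simpa using hn)

theorem im_two_pi_I_div (c : ℂ) : (2 * π * I / c).im = 2 * π * c.re / normSq c := by
  simp [div_im]

theorem normSq_le_two_mul_re_iff (c : ℂ) : normSq c ≤ 2 * c.re ↔ ‖c - 1‖ ≤ 1 := by
  have hsq : ‖c - 1‖ ^ 2 = normSq c - 2 * c.re + 1 := by
    rw [← Complex.normSq_eq_norm_sq]; simp [normSq_apply]; ring
  rw [← sq_le_one_iff₀ (norm_nonneg _), hsq]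
  constructor <;> intro h <;> linarith

theorem norm_le_two_mul_cos_arg_iff {c : ℂ} (hc : c ≠ 0) :
    ‖c‖ ≤ 2 * Real.cos c.arg ↔ normSq c ≤ 2 * c.re := by
  have hnorm : 0 < ‖c‖ := norm_pos_iff.mpr hc
  rw [← norm_mul_cos_arg, normSq_eq_norm_sq, sq, mul_left_comm]
  exact (mul_le_mul_iff_right₀ hnorm).symm

theorem pi_le_abs_im_two_pi_I_div_iff {c : ℂ} (hc : c ≠ 0) (hre : 0 ≤ c.re) :
    π ≤ |(2 * π * I / c).im| ↔ normSq c ≤ 2 * c.re := by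
  have hnsq : 0 < normSq c := normSq_pos.mpr hc
  rw [im_two_pi_I_div, abs_of_nonneg (by positivity), le_div_iff₀ hnsq, mul_assoc,
    mul_left_comm, mul_le_mul_iff_right₀ pi_pos]

end Complex

/-- for `c ≠ 0` with `arg c ∈ (-π/2, π/2)`, the exponential map is injective
on `S_c = c · S`, `S` the strip `0 < Im w < π`, iff `|c| ≤ 2 cos (arg c)`, equivalently
iff `|c - 1| ≤ 1`. -/
theorem stmt_8 (c : ℂ) (hc : c ≠ 0) (hθ : c.arg ∈ Set.Ioo (-(π / 2)) (π / 2)) :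
    (Set.InjOn Complex.exp ((fun w => c * w) '' {w : ℂ | 0 < w.im ∧ w.im < π}) ↔
      ‖c‖ ≤ 2 * Real.cos c.arg) ∧
    (‖c‖ ≤ 2 * Real.cos c.arg ↔ ‖c - 1‖ ≤ 1) := by
  have hre : 0 ≤ c.re := by
    rw [← Complex.norm_mul_cos_arg]
    exact mul_nonneg (norm_nonneg c) (cos_nonneg_of_mem_Icc ⟨hθ.1.le, hθ.2.le⟩)
  rw [Complex.norm_le_two_mul_cos_arg_iff hc]
  refine ⟨?_, Complex.normSq_le_two_mul_re_iff c⟩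
  rw [Complex.injOn_exp_image_mul_iff hc, ← Complex.le_abs_im_iff_forall_add_int_mul_mem_strip,
    Complex.pi_le_abs_im_two_pi_I_div_iff hc hre]
end

section
/- Let v : ℝⁿ → ℝⁿ be a locally Lipschitz bounded vector field generating a flow, and let γ : [0,∞) → ℝⁿ be a C¹ path with precompact image such that γ'(t) - v(γ(t)) → 0 as t → ∞. If p is an accumulation point of γ(t) as t → ∞ and p is an asymptotically stable (attracting) equilibrium of v whose basin contains a neighborhood of p in which p is the only point of the accumulation set, then γ(t) → p as t → ∞. -/
/-!
Choose a closed ball `B` around `p` in which `p` is the only accumulation point of `γ`. The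
bounding sphere meets the compact set `closure (range γ)` in a compact set free of accumulation
points, so `γ` eventually avoids the sphere. Since `γ` is continuous and returns arbitrarily
late into the interior of `B`, it then eventually stays inside `B`; there, in a compact set,
its only accumulation point is `p`, so it converges to `p`.
-/

open Filter Topology Metric Set

theorem Continuous.eventually_lt_of_frequently_lt_of_eventually_ne {α β : Type*}
    [ConditionallyCompleteLinearOrder α] [TopologicalSpace α] [OrderTopology α]
    [DenselyOrdered α] [LinearOrder β] [TopologicalSpace β] [OrderClosedTopology β]
    {f : α → β} {c : β} (hf : Continuous f) (hlt : ∃ᶠ t in atTop, f t < c)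
    (hne : ∀ᶠ t in atTop, f t ≠ c) : ∀ᶠ t in atTop, f t < c := by
  obtain ⟨T, hT⟩ := eventually_atTop.mp hne
  obtain ⟨t₀, ht₀c, hTt₀⟩ := (hlt.and_eventually (eventually_ge_atTop T)).exists
  refine eventually_atTop.mpr ⟨t₀, fun t ht => not_le.mp fun hct => ?_⟩
  obtain ⟨s, hs, hsc⟩ := intermediate_value_Icc ht hf.continuousOn ⟨ht₀c.le, hct⟩
  exact hT s (hTt₀.trans hs.1) hsc

theorem Continuous.tendsto_atTop_of_isolated_mapClusterPt {α X : Type*}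
    [ConditionallyCompleteLinearOrder α] [TopologicalSpace α] [OrderTopology α]
    [DenselyOrdered α] [PseudoMetricSpace X] {γ : α → X} {p : X} (hγ : Continuous γ)
    (hpre : IsCompact (closure (range γ))) (hacc : MapClusterPt p atTop γ)
    (hiso : ∃ U ∈ 𝓝 p, ∀ q, MapClusterPt q atTop γ → q ∈ U → q = p) :
    Tendsto γ atTop (𝓝 p) := by
  obtain ⟨U, hU, hUiso⟩ := hiso
  obtain ⟨δ, hδ, hδU⟩ := nhds_basis_closedBall.mem_iff.mp hU
  have hunique : ∀ q ∈ closedBall p δ, MapClusterPt q atTop γ → q = p := fun q hq hqγ =>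
    hUiso q hqγ (hδU hq)
  have hsphere : ∀ᶠ t in atTop, dist (γ t) p ≠ δ := by
    refine not_frequently.mp fun hfreq => ?_
    obtain ⟨q, ⟨-, hqδ⟩, hqγ⟩ :=
      (hpre.inter_right isClosed_sphere).exists_mapClusterPt_of_frequently
        (hfreq.mono fun t ht => ⟨subset_closure (mem_range_self t), ht⟩)
    rw [hunique q (sphere_subset_closedBall hqδ) hqγ, mem_sphere, dist_self] at hqδ
    exact hδ.ne hqδ
  have hball : ∀ᶠ t in atTop, dist (γ t) p < δ :=
    (hγ.dist continuous_const).eventually_lt_of_frequently_lt_of_eventually_ne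
      (mapClusterPt_iff_frequently.mp hacc _ (ball_mem_nhds p hδ)) hsphere
  exact (hpre.inter_right isClosed_closedBall).tendsto_nhds_of_unique_mapClusterPt
    (hball.mono fun t ht => ⟨subset_closure (mem_range_self t), ht.le⟩)
    fun q hq => hunique q hq.2

theorem stmt_18_general (n : ℕ)
    (γ : ℝ → EuclideanSpace ℝ (Fin n)) (hγ : ContDiff ℝ 1 γ)
    (hpre : IsCompact (closure (Set.range γ)))
    (p : EuclideanSpace ℝ (Fin n))
    (hacc : MapClusterPt p atTop γ)
    (hiso : ∃ U ∈ 𝓝 p, ∀ q, MapClusterPt q atTop γ → q ∈ U → q = p) :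
    Tendsto γ atTop (𝓝 p) :=
  hγ.continuous.tendsto_atTop_of_isolated_mapClusterPt hpre hacc hiso

/-- let `v` be a locally Lipschitz bounded vector field on `ℝⁿ` and `γ` a C¹
path with precompact image with `γ'(t) - v(γ(t)) → 0` as `t → ∞`. If `p` is an
accumulation point of `γ` at infinity, is an attracting equilibrium of `v` (every integral
curve of `v` starting in some neighborhood of `p` converges to `p`), and has a
neighborhood in which it is the only accumulation point of `γ`, then `γ(t) → p`. -/
theorem stmt_18 (n : ℕ) (v : EuclideanSpace ℝ (Fin n) → EuclideanSpace ℝ (Fin n))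
    (hvlip : LocallyLipschitz v) (C : ℝ) (hvbd : ∀ x, ‖v x‖ ≤ C)
    (γ : ℝ → EuclideanSpace ℝ (Fin n)) (hγ : ContDiff ℝ 1 γ)
    (hpre : IsCompact (closure (Set.range γ)))
    (hasym : Tendsto (fun t => deriv γ t - v (γ t)) atTop (𝓝 0))
    (p : EuclideanSpace ℝ (Fin n))
    (hacc : MapClusterPt p atTop γ)
    (heq : v p = 0)
    (hattr : ∃ U ∈ 𝓝 p, ∀ β : ℝ → EuclideanSpace ℝ (Fin n),
      (∀ t : ℝ, HasDerivAt β (v (β t)) t) → β 0 ∈ U → Tendsto β atTop (𝓝 p))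
    (hiso : ∃ U ∈ 𝓝 p, ∀ q, MapClusterPt q atTop γ → q ∈ U → q = p) :
    Tendsto γ atTop (𝓝 p) :=
  stmt_18_general n γ hγ hpre p hacc hiso
end
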